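/- arXiv:1304.3914 — 2 statements merged into one kernel-verified Lean document; each statement's English description precedes it below -/
import Mathlib

section
/- For a Bell-diagonal state (x⃗ = y⃗ = 0, T = diag(t₁,t₂,t₃)), the conditional entropy satisfies S(n̂) = h₂((1+|T n̂|)/2) for every unit vector n̂, and its minimum over all unit vectors equals h₂((1+t_max)/2) where t_max = max{|t₁|,|t₂|,|t₃|}. -/
noncomputable section
open Matrix

def dot3 (u v : Fin 3 → ℝ) : ℝ := ∑ i, u i * v i
def norm3 (v : Fin 3 → ℝ) : ℝ := Real.sqrt (dot3 v v)

/-- Binary Shannon entropy (base 2). -/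
def h2 (x : ℝ) : ℝ := -(x * Real.logb 2 x) - (1 - x) * Real.logb 2 (1 - x)

/-- Shannon entropy of four probabilities. -/
def h4 (a b c d : ℝ) : ℝ :=
  -(a * Real.logb 2 a) - b * Real.logb 2 b - c * Real.logb 2 c - d * Real.logb 2 d

/-- The conditional entropy `S(n̂) = h₄(w⃗) - h₂(p₀)`. -/
def condEnt (x y : Fin 3 → ℝ) (T : Matrix (Fin 3) (Fin 3) ℝ) (n : Fin 3 → ℝ) : ℝ :=
  let p0 := (1 + dot3 y n) / 2
  let p1 := (1 - dot3 y n) / 2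
  h4 ((2 * p0 + norm3 (x + T.mulVec n)) / 4) ((2 * p0 - norm3 (x + T.mulVec n)) / 4)
     ((2 * p1 + norm3 (x - T.mulVec n)) / 4) ((2 * p1 - norm3 (x - T.mulVec n)) / 4)
    - h2 p0

/-! With `x⃗ = y⃗ = 0` the four weights are `(1 ± r)/4`, each taken twice, so
`h₄ = h₂((1 + r)/2) + 1`, and the `1` cancels against `h₂(1/2)`. For diagonal `T`,
`|T n̂|² = ∑ tᵢ² nᵢ² ≤ t_max²` on the unit sphere, with equality at a coordinate vector;
since `r ↦ h₂((1 + r)/2)` is antitone on `[0, 1]`, this maximum of `|T n̂|` is turned into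
the minimum of `S`. -/

open Set

lemma h2_eq_binEntropy_div_log (x : ℝ) : h2 x = Real.binEntropy x / Real.log 2 := by
  simp only [h2, Real.binEntropy, Real.logb, Real.log_inv]
  ring

lemma h2_half : h2 (1 / 2) = 1 := by
  rw [h2_eq_binEntropy_div_log, one_div, Real.binEntropy_two_inv,
    div_self (Real.log_pos one_lt_two).ne']

lemma div_mul_logb_div_base {b : ℝ} (hb : 1 < b) (x : ℝ) :
    x / b * Real.logb b (x / b) = (x * Real.logb b x - x) / b := by
  rcases eq_or_ne x 0 with rfl | hx
  · simp
  · rw [Real.logb_div hx (by positivity), Real.logb_self_eq_one hb]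
    ring

lemma h2_one_add_div_two_antitoneOn : AntitoneOn (fun r => h2 ((1 + r) / 2)) (Icc 0 1) := by
  intro r ⟨hr0, _⟩ s ⟨_, hs1⟩ hrs
  simp only [h2_eq_binEntropy_div_log]
  gcongr ?_ / _
  refine Real.binEntropy_strictAntiOn.antitoneOn ⟨?_, ?_⟩ ⟨?_, ?_⟩ ?_ <;> linarith

lemma norm3_neg (v : Fin 3 → ℝ) : norm3 (-v) = norm3 v := by
  simp [norm3, dot3]

lemma h4_quarters (r : ℝ) :
    h4 ((1 + r) / 4) ((1 - r) / 4) ((1 + r) / 4) ((1 - r) / 4) = h2 ((1 + r) / 2) + 1 := by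
  rw [show (1 + r) / 4 = (1 + r) / 2 / 2 by ring, show (1 - r) / 4 = (1 - (1 + r) / 2) / 2 by ring]
  simp only [h4, h2, div_mul_logb_div_base one_lt_two]
  ring

lemma condEnt_zero_zero (T : Matrix (Fin 3) (Fin 3) ℝ) (n : Fin 3 → ℝ) :
    condEnt 0 0 T n = h2 ((1 + norm3 (T *ᵥ n)) / 2) := by
  have hdot : dot3 0 n = 0 := by simp [dot3]
  norm_num [condEnt, hdot, h2_half, norm3_neg, h4_quarters]

lemma norm3_diagonal_mulVec (t n : Fin 3 → ℝ) :
    norm3 (diagonal t *ᵥ n) = Real.sqrt (∑ i, (t i * n i) ^ 2) := by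
  simp [norm3, dot3, mulVec_diagonal, sq]

lemma dot3_single_self (i : Fin 3) (a : ℝ) : dot3 (Pi.single i a) (Pi.single i a) = a * a := by
  simp [dot3, Pi.single_apply]

lemma norm3_diagonal_mulVec_le {t n : Fin 3 → ℝ} {c : ℝ} (hc : 0 ≤ c) (ht : ∀ i, |t i| ≤ c)
    (hn : dot3 n n = 1) : norm3 (diagonal t *ᵥ n) ≤ c := by
  rw [norm3_diagonal_mulVec, Real.sqrt_le_left hc]
  calc ∑ i, (t i * n i) ^ 2 ≤ ∑ i, c ^ 2 * n i ^ 2 := by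
        refine Finset.sum_le_sum fun i _ => ?_
        rw [mul_pow]
        exact mul_le_mul_of_nonneg_right (sq_le_sq' (abs_le.mp (ht i)).1 (abs_le.mp (ht i)).2)
          (sq_nonneg _)
    _ = c ^ 2 * dot3 n n := by simp only [dot3, Finset.mul_sum, sq]
    _ = c ^ 2 := by rw [hn, mul_one]

lemma norm3_diagonal_mulVec_single (t : Fin 3 → ℝ) (i : Fin 3) :
    norm3 (diagonal t *ᵥ Pi.single i 1) = |t i| := by
  rw [diagonal_mulVec_single, mul_one, norm3, dot3_single_self, Real.sqrt_mul_self_eq_abs]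

lemma Fin.exists_eq_max_three {α : Type*} [LinearOrder α] (f : Fin 3 → α) :
    ∃ i, f i = max (f 0) (max (f 1) (f 2)) := by
  rcases max_cases (f 0) (max (f 1) (f 2)) with ⟨h, -⟩ | ⟨h, -⟩
  · exact ⟨0, h.symm⟩
  rcases max_cases (f 1) (f 2) with ⟨h', -⟩ | ⟨h', -⟩
  · exact ⟨1, by rw [h, h']⟩
  · exact ⟨2, by rw [h, h']⟩

lemma Fin.le_max_three {α : Type*} [LinearOrder α] (f : Fin 3 → α) (i : Fin 3) :
    f i ≤ max (f 0) (max (f 1) (f 2)) := by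
  fin_cases i <;> simp

lemma isGreatest_norm3_diagonal_mulVec (t : Fin 3 → ℝ) :
    IsGreatest ((fun n => norm3 (diagonal t *ᵥ n)) '' {n | dot3 n n = 1})
      (max |t 0| (max |t 1| |t 2|)) := by
  obtain ⟨i, hi⟩ := Fin.exists_eq_max_three fun i => |t i|
  refine ⟨⟨Pi.single i 1, by simp [dot3_single_self],
    (norm3_diagonal_mulVec_single t i).trans hi⟩, ?_⟩
  rintro _ ⟨n, hn, rfl⟩
  exact norm3_diagonal_mulVec_le (hi ▸ abs_nonneg _) (Fin.le_max_three fun i => |t i|) hn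

/-- For Bell-diagonal states (`x⃗ = y⃗ = 0`, `T = diag(t₁,t₂,t₃)`, `|tᵢ| ≤ 1`):
`S(n̂) = h₂((1+|T n̂|)/2)` for every unit `n̂`, and its minimum over unit vectors
is `h₂((1+t_max)/2)` with `t_max = max{|t₁|,|t₂|,|t₃|}`. -/
theorem bell_diagonal_conditional_entropy (t : Fin 3 → ℝ) (ht : ∀ i, |t i| ≤ 1) :
    let T := Matrix.diagonal t
    let tmax := max |t 0| (max |t 1| |t 2|)
    (∀ n : Fin 3 → ℝ, dot3 n n = 1 →
        condEnt 0 0 T n = h2 ((1 + norm3 (T.mulVec n)) / 2)) ∧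
    IsLeast {s : ℝ | ∃ n : Fin 3 → ℝ, dot3 n n = 1 ∧ s = condEnt 0 0 T n}
      (h2 ((1 + tmax) / 2)) := by
  intro T tmax
  set normsT := (fun n => norm3 (T *ᵥ n)) '' {n | dot3 n n = 1}
  have hmax : IsGreatest normsT tmax := isGreatest_norm3_diagonal_mulVec t
  have hnormsT : normsT ⊆ Icc 0 1 := by
    rintro _ ⟨n, hn, rfl⟩
    exact ⟨Real.sqrt_nonneg _, (hmax.2 ⟨n, hn, rfl⟩).trans (max_le (ht 0) (max_le (ht 1) (ht 2)))⟩
  have hvalues : {s | ∃ n, dot3 n n = 1 ∧ s = condEnt 0 0 T n} =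
      (fun r => h2 ((1 + r) / 2)) '' normsT := by
    ext
    simp [normsT, condEnt_zero_zero, eq_comm]
  refine ⟨fun n _ => condEnt_zero_zero T n, hvalues ▸ ?_⟩
  exact (h2_one_add_div_two_antitoneOn.mono hnormsT).map_isGreatest hmax
end
end

section
/- Let t₁, t₂, t₃ ∈ ℝ with μ₁,₂ = (1 ± t₁ ± t₂ - t₃)/4 ≥ 0 and μ₃,₄ = (1 ± t₁ ∓ t₂ + t₃)/4 ≥ 0 (eigenvalues of a Bell-diagonal state). Then the quantum discord Q = 1 - h₄(μ₁,μ₂,μ₃,μ₄) + h₂((1+t_max)/2) is nonnegative, where t_max = max{|t₁|,|t₂|,|t₃|}. -/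
/-!
The eigenvalues `μᵢ` form a joint distribution of two bits whose marginals are `(1 ± t)/2` and
`(1 ± s)/2` for any two distinct `t, s` among `t₁, t₂, t₃`. Subadditivity of Shannon entropy
gives `h₄(μ) ≤ h₂((1 + t)/2) + h₂((1 + s)/2) ≤ h₂((1 + t)/2) + 1`, and `h₂((1 + t)/2)` depends
only on `|t|`; choosing `|t| = t_max` gives `Q ≥ 0`.
-/

noncomputable section

open Finset

namespace Real

lemma negMulLog_le_sub_sub_mul_log {p q : ℝ} (hp : 0 ≤ p) (hq : 0 < q) :
    negMulLog p ≤ q - p - p * log q := by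
  rcases hp.eq_or_lt with rfl | hp
  · simpa using hq.le
  calc negMulLog p = p * (log q - log p) - p * log q := by rw [negMulLog]; ring
    _ ≤ p * (q / p - 1) - p * log q := by
      have h := log_le_sub_one_of_pos (div_pos hq hp)
      rw [log_div hq.ne' hp.ne'] at h
      gcongr
    _ = q - p - p * log q := by field_simp

lemma negMulLog_le_of_le_marginals {p r c : ℝ} (hp : 0 ≤ p) (hpr : p ≤ r) (hpc : p ≤ c) :
    negMulLog p ≤ r * c - p - p * log r - p * log c := by
  rcases hp.eq_or_lt with rfl | hp
  · simpa using mul_nonneg hpr hpc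
  have hr := hp.trans_le hpr
  have hc := hp.trans_le hpc
  have h := negMulLog_le_sub_sub_mul_log hp.le (mul_pos hr hc)
  rw [log_mul hr.ne' hc.ne'] at h
  linarith

theorem sum_negMulLog_le_sum_negMulLog_marginals {ι κ : Type*} [Fintype ι] [Fintype κ]
    (p : ι → κ → ℝ) (hp : ∀ i j, 0 ≤ p i j) (hsum : ∑ i, ∑ j, p i j = 1) :
    ∑ i, ∑ j, negMulLog (p i j) ≤
      ∑ i, negMulLog (∑ j, p i j) + ∑ j, negMulLog (∑ i, p i j) := by
  set r : ι → ℝ := fun i ↦ ∑ j, p i j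
  set c : κ → ℝ := fun j ↦ ∑ i, p i j
  have hc : ∑ j, c j = 1 := by rw [Finset.sum_comm]; exact hsum
  have hcell : ∀ i j,
      negMulLog (p i j) ≤ r i * c j - p i j - p i j * log (r i) - p i j * log (c j) :=
    fun i j ↦ negMulLog_le_of_le_marginals (hp i j)
      (single_le_sum (fun j _ ↦ hp i j) (mem_univ j))
      (single_le_sum (f := fun i ↦ p i j) (fun i _ ↦ hp i j) (mem_univ i))
  have hrow : ∑ i, ∑ j, p i j * log (r i) = -∑ i, negMulLog (r i) := by
    simp only [← sum_mul, negMulLog, ← sum_neg_distrib, r]; simp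
  have hcol : ∑ i, ∑ j, p i j * log (c j) = -∑ j, negMulLog (c j) := by
    rw [sum_comm]; simp only [← sum_mul, negMulLog, ← sum_neg_distrib, c]; simp
  have hprod : ∑ i, ∑ j, r i * c j = 1 := by
    rw [← sum_mul_sum, hc]; simpa using hsum
  calc ∑ i, ∑ j, negMulLog (p i j)
      ≤ ∑ i, ∑ j, (r i * c j - p i j - p i j * log (r i) - p i j * log (c j)) :=
        sum_le_sum fun i _ ↦ sum_le_sum fun j _ ↦ hcell i j
    _ = ∑ i, negMulLog (r i) + ∑ j, negMulLog (c j) := by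
        simp only [sum_sub_distrib]; rw [hrow, hcol, hprod, hsum]; ring

lemma binEntropy_half_one_add_abs (t : ℝ) :
    binEntropy ((1 + |t|) / 2) = binEntropy ((1 + t) / 2) := by
  rcases abs_cases t with ⟨h, -⟩ | ⟨h, -⟩
  · rw [h]
  · rw [h, ← binEntropy_one_sub]
    congr 1
    ring

lemma negMulLog_add_four_le {a b c d t : ℝ} (ha : 0 ≤ a) (hb : 0 ≤ b) (hc : 0 ≤ c) (hd : 0 ≤ d)
    (hsum : a + b + c + d = 1) (hab : a + b = (1 + t) / 2) :
    negMulLog a + negMulLog b + negMulLog c + negMulLog d ≤ binEntropy ((1 + |t|) / 2) + log 2 := by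
  have h := sum_negMulLog_le_sum_negMulLog_marginals ![![a, b], ![c, d]]
    (by simp [Fin.forall_fin_two, *]) (by simp [Fin.sum_univ_two]; linarith)
  simp only [Fin.sum_univ_two, Matrix.cons_val_zero, Matrix.cons_val_one] at h
  have hrow : negMulLog (a + b) + negMulLog (c + d) = binEntropy ((1 + |t|) / 2) := by
    rw [binEntropy_half_one_add_abs, binEntropy_eq_negMulLog_add_negMulLog_one_sub, ← hab,
      show 1 - (a + b) = c + d by linarith]
  have hcol : negMulLog (a + c) + negMulLog (b + d) ≤ log 2 := by
    rw [show b + d = 1 - (a + c) by linarith, ← binEntropy_eq_negMulLog_add_negMulLog_one_sub]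
    exact binEntropy_le_log_two
  linarith

end Real

open Real in
lemma one_sub_h4_add_h2 (a b c d x : ℝ) :
    1 - h4 a b c d + h2 x =
      (log 2 - (negMulLog a + negMulLog b + negMulLog c + negMulLog d) + binEntropy x) / log 2 := by
  have hlog2 : log 2 ≠ 0 := (log_pos one_lt_two).ne'
  simp only [h4, h2, logb, binEntropy_eq_negMulLog_add_negMulLog_one_sub, negMulLog]
  field_simp
  ring

/-- Nonnegativity of the quantum discord
`Q = 1 - h₄(μ₁,μ₂,μ₃,μ₄) + h₂((1+t_max)/2)` of a Bell-diagonal state with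
correlation matrix `diag(t₁,t₂,t₃)`. -/
theorem bell_diagonal_discord_nonneg (t1 t2 t3 : ℝ)
    (hμ1 : 0 ≤ (1 + t1 + t2 - t3) / 4)
    (hμ2 : 0 ≤ (1 - t1 - t2 - t3) / 4)
    (hμ3 : 0 ≤ (1 + t1 - t2 + t3) / 4)
    (hμ4 : 0 ≤ (1 - t1 + t2 + t3) / 4) :
    let tmax := max |t1| (max |t2| |t3|)
    0 ≤ 1 - h4 ((1 + t1 + t2 - t3) / 4) ((1 - t1 - t2 - t3) / 4)
          ((1 + t1 - t2 + t3) / 4) ((1 - t1 + t2 + t3) / 4)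
        + h2 ((1 + tmax) / 2) := by
  intro tmax
  -- `μ₁ + μ₃ = (1 + t₁)/2`, `μ₁ + μ₄ = (1 + t₂)/2`, `μ₃ + μ₄ = (1 + t₃)/2`
  have ht1 := Real.negMulLog_add_four_le hμ1 hμ3 hμ2 hμ4 (by ring) (t := t1) (by ring)
  have ht2 := Real.negMulLog_add_four_le hμ1 hμ4 hμ2 hμ3 (by ring) (t := t2) (by ring)
  have ht3 := Real.negMulLog_add_four_le hμ3 hμ4 hμ1 hμ2 (by ring) (t := t3) (by ring)
  have htmax : tmax = |t1| ∨ tmax = |t2| ∨ tmax = |t3| :=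
    (max_choice _ _).imp_right fun h ↦ (max_choice _ _).imp h.trans h.trans
  rw [one_sub_h4_add_h2]
  refine div_nonneg ?_ (Real.log_pos one_lt_two).le
  rcases htmax with h | h | h <;> rw [h] <;> linarith
end
end
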